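/- Let K ⊂ E be a set in a normed space that is invariant under a group of isometric translations (u ↦ u(·−y), y ∈ ℤ^d) and such that each orbit has a representative in a finite set 𝓗 of unit vectors, where distinct elements v, w of K with v ≠ w and in the same 'bounded shift' class have ‖v − w‖ equal to a fixed positive value, while for unbounded shifts w(·−z_n) ⇀ 0 weakly and hence ‖v − w(·−z_n)‖ ≥ ‖v‖ = 1 in the limit. Conclude: k := inf{‖v − w‖ : v, w ∈ K, v ≠ w} > 0. -/

import Mathlib

/-!
Translations are isometries of `ℓ²(ℤ^d)`, so `‖w(· - y) - w'(· - y')‖² = ‖w - w'(· - z)‖²`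
with `z = y' - y`: the squared distances in `K` are values of the finitely many functions
`z ↦ ‖w - w'(· - z)‖²`, `w, w' ∈ 𝓗`. Since `w'(· - z) ⇀ 0` as `z → ∞`, each of them tends to
`‖w‖² + ‖w'‖² = 2`, so only finitely many of these values lie below `1`; those coming from
distinct points are positive, hence so is their minimum.
-/

open Filter Topology

section Square

variable {ι : Type*} {f g : ι → ℝ}

theorem Memℓp.summable_sq (hf : Memℓp f 2) : Summable fun x => f x ^ 2 := by
  simpa [Real.rpow_two, sq_abs] using hf.summable (by norm_num)

theorem summable_mul_of_summable_sq (hf : Summable fun x => f x ^ 2)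
    (hg : Summable fun x => g x ^ 2) : Summable fun x => f x * g x := by
  refine Summable.of_norm_bounded ((hf.add hg).div_const 2) fun x => ?_
  have := two_mul_le_add_sq |f x| |g x|
  rw [sq_abs, sq_abs] at this
  rw [Real.norm_eq_abs, abs_mul]
  linarith

theorem tsum_mul_sq_le (hf : Summable fun x => f x ^ 2) (hg : Summable fun x => g x ^ 2) :
    (∑' x, f x * g x) ^ 2 ≤ (∑' x, f x ^ 2) * ∑' x, g x ^ 2 :=
  le_of_tendsto_of_tendsto' ((summable_mul_of_summable_sq hf hg).hasSum.pow 2)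
    (Tendsto.mul hf.hasSum hg.hasSum) fun s => Finset.sum_mul_sq_le_sq_mul_sq s f g

theorem summable_sub_sq (hf : Summable fun x => f x ^ 2) (hg : Summable fun x => g x ^ 2) :
    Summable fun x => (f x - g x) ^ 2 :=
  ((hf.add hg).sub ((summable_mul_of_summable_sq hf hg).mul_left 2)).congr fun x => by ring

theorem tsum_sub_sq (hf : Summable fun x => f x ^ 2) (hg : Summable fun x => g x ^ 2) :
    ∑' x, (f x - g x) ^ 2 = ∑' x, f x ^ 2 + ∑' x, g x ^ 2 - 2 * ∑' x, f x * g x := by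
  rw [tsum_congr fun x => show (f x - g x) ^ 2 = f x ^ 2 + g x ^ 2 - 2 * (f x * g x) by ring,
    (hf.add hg).tsum_sub ((summable_mul_of_summable_sq hf hg).mul_left 2), hf.tsum_add hg,
    tsum_mul_left]

theorem tsum_sub_sq_pos (hf : Summable fun x => f x ^ 2) (hg : Summable fun x => g x ^ 2)
    (hfg : f ≠ g) : 0 < ∑' x, (f x - g x) ^ 2 := by
  obtain ⟨x, hx⟩ := Function.ne_iff.1 hfg
  exact (summable_sub_sq hf hg).tsum_pos (fun _ => sq_nonneg _) x
    (sq_pos_of_ne_zero (sub_ne_zero.2 hx))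

theorem tendsto_cofinite_zero_of_summable_sq (hf : Summable fun x => f x ^ 2) :
    Tendsto f cofinite (𝓝 0) := by
  have := hf.tendsto_cofinite_zero.sqrt
  simp only [Real.sqrt_sq_eq_abs, Real.sqrt_zero] at this
  exact tendsto_zero_iff_abs_tendsto_zero f |>.2 this

end Square

section Translation

variable {ι : Type*} [AddCommGroup ι] {a b : ι → ℝ}

theorem summable_sq_comp_sub (hb : Summable fun x => b x ^ 2) (z : ι) :
    Summable fun x => b (x - z) ^ 2 :=
  (Equiv.subRight z).summable_iff.2 hb

theorem tsum_sq_comp_sub (b : ι → ℝ) (z : ι) : ∑' x, b (x - z) ^ 2 = ∑' x, b x ^ 2 :=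
  (Equiv.subRight z).tsum_eq fun x => b x ^ 2

theorem tsum_comp_sub_sub_comp_sub_sq (a b : ι → ℝ) (y y' : ι) :
    ∑' x, (a (x - y) - b (x - y')) ^ 2 = ∑' x, (a x - b (x - (y' - y))) ^ 2 := by
  rw [← (Equiv.subRight y).tsum_eq fun x => (a x - b (x - (y' - y))) ^ 2]
  simp only [Equiv.subRight_apply, sub_sub_sub_cancel_right]

theorem tendsto_tsum_mul_comp_sub_cofinite (ha : Summable fun x => a x ^ 2)
    (hb : Summable fun x => b x ^ 2) :
    Tendsto (fun z => ∑' x, a x * b (x - z)) cofinite (𝓝 0) := by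
  rw [Metric.tendsto_nhds]
  intro ε hε
  -- Split off a finite set `S` outside which `a` has small `ℓ²` mass: the terms over `S` vanish
  -- as `b(x - z) → 0`, and the rest is bounded by Cauchy–Schwarz.
  set B := ∑' x, b x ^ 2
  obtain ⟨S, hS⟩ : ∃ S : Finset ι, (∑' x : {x // x ∉ S}, a x ^ 2) * B < (ε / 2) ^ 2 := by
    refine (((tendsto_tsum_compl_atTop_zero fun x => a x ^ 2).mul_const B).eventually
      (gt_mem_nhds ?_)).exists
    rw [zero_mul]
    positivity
  have hhead : Tendsto (fun z => ∑ x ∈ S, a x * b (x - z)) cofinite (𝓝 0) := by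
    simpa using tendsto_finsetSum S fun x _ =>
      ((tendsto_cofinite_zero_of_summable_sq hb).comp
        (sub_right_injective (b := x)).tendsto_cofinite).const_mul (a x)
  filter_upwards [hhead.eventually (Metric.ball_mem_nhds 0 (half_pos hε))] with z hz
  rw [Real.dist_0_eq_abs] at hz
  have hbz := summable_sq_comp_sub hb z
  have htail : |∑' x : {x // x ∉ S}, a x * b (x - z)| < ε / 2 := by
    refine abs_lt_of_sq_lt_sq (lt_of_le_of_lt ?_ hS) (half_pos hε).le
    calc (∑' x : {x // x ∉ S}, a x * b (x - z)) ^ 2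
        ≤ (∑' x : {x // x ∉ S}, a x ^ 2) * ∑' x : {x // x ∉ S}, b (x - z) ^ 2 :=
          tsum_mul_sq_le (ha.subtype _) (hbz.subtype _)
      _ ≤ (∑' x : {x // x ∉ S}, a x ^ 2) * B := by
          refine mul_le_mul_of_nonneg_left ?_ (tsum_nonneg fun _ => sq_nonneg _)
          exact (hbz.tsum_subtype_le _ _ fun _ => sq_nonneg _).trans_eq (tsum_sq_comp_sub b z)
  rw [Real.dist_0_eq_abs, ← (summable_mul_of_summable_sq ha hbz).sum_add_tsum_compl (s := S)]
  exact (abs_add_le _ _).trans_lt (add_halves ε ▸ add_lt_add hz htail)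

theorem tendsto_tsum_sub_comp_sub_sq_cofinite (ha : Summable fun x => a x ^ 2)
    (hb : Summable fun x => b x ^ 2) :
    Tendsto (fun z => ∑' x, (a x - b (x - z)) ^ 2) cofinite
      (𝓝 (∑' x, a x ^ 2 + ∑' x, b x ^ 2)) := by
  have h := ((tendsto_tsum_mul_comp_sub_cofinite ha hb).const_mul 2).const_sub
    (∑' x, a x ^ 2 + ∑' x, b x ^ 2)
  rw [mul_zero, sub_zero] at h
  refine h.congr fun z => ?_
  rw [tsum_sub_sq ha (summable_sq_comp_sub hb z), tsum_sq_comp_sub]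

theorem finite_setOf_tsum_sub_comp_sub_sq_lt (ha : Summable fun x => a x ^ 2)
    (hb : Summable fun x => b x ^ 2) {r : ℝ} (hr : r < ∑' x, a x ^ 2 + ∑' x, b x ^ 2) :
    {z | ∑' x, (a x - b (x - z)) ^ 2 < r}.Finite := by
  simpa only [not_le] using eventually_cofinite.1
    ((tendsto_tsum_sub_comp_sub_sq_cofinite ha hb).eventually (eventually_ge_nhds hr))

end Translation

theorem exists_pos_forall_le_of_finite_inter_Iio {D : Set ℝ} (hD : ∀ t ∈ D, 0 < t) {r : ℝ}
    (hr : 0 < r) (hfin : (D ∩ Set.Iio r).Finite) : ∃ k > 0, ∀ t ∈ D, k ≤ t := by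
  obtain ⟨k, hk, hmin⟩ := Set.exists_min_image (insert r (D ∩ Set.Iio r)) id
    (hfin.insert r) (Set.insert_nonempty _ _)
  refine ⟨k, ?_, fun t ht => ?_⟩
  · rcases hk with rfl | hk
    exacts [hr, hD k hk.1]
  · by_cases htr : t < r
    · exact hmin t (Or.inr ⟨ht, htr⟩)
    · exact (hmin r (Set.mem_insert r _)).trans (not_lt.1 htr)

theorem orbit_separation_general (d : ℕ)
    (𝓗 : Finset ((Fin d → ℤ) → ℝ))
    (hmem : ∀ w ∈ 𝓗, Memℓp w 2)
    (hunit : ∀ w ∈ 𝓗, (∑' x : Fin d → ℤ, (w x) ^ 2) = 1)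
    (K : Set ((Fin d → ℤ) → ℝ))
    (hK : K = {v | ∃ w ∈ 𝓗, ∃ y : Fin d → ℤ, v = fun x => w (x - y)}) :
    ∃ k > (0:ℝ), ∀ v ∈ K, ∀ w ∈ K, v ≠ w →
      k ≤ Real.sqrt (∑' x : Fin d → ℤ, (v x - w x) ^ 2) := by
  have hsq w (hw : w ∈ 𝓗) := (hmem w hw).summable_sq
  set D := {t | ∃ v ∈ K, ∃ w ∈ K, v ≠ w ∧ t = ∑' x, (v x - w x) ^ 2}
  have hpos : ∀ t ∈ D, 0 < t := by
    rintro _ ⟨v, hv, w, hw, hvw, rfl⟩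
    rw [hK] at hv hw
    obtain ⟨a, ha, y, rfl⟩ := hv
    obtain ⟨b, hb, y', rfl⟩ := hw
    exact tsum_sub_sq_pos (summable_sq_comp_sub (hsq a ha) y)
      (summable_sq_comp_sub (hsq b hb) y') hvw
  have hfin : (D ∩ Set.Iio 1).Finite := by
    let N (a b : (Fin d → ℤ) → ℝ) (z : Fin d → ℤ) := ∑' x, (a x - b (x - z)) ^ 2
    refine Set.Finite.subset (s := ⋃ a ∈ 𝓗, ⋃ b ∈ 𝓗, N a b '' {z | N a b z < 1})
      (𝓗.finite_toSet.biUnion fun a ha => 𝓗.finite_toSet.biUnion fun b hb => ?_) ?_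
    · refine (finite_setOf_tsum_sub_comp_sub_sq_lt (hsq a ha) (hsq b hb) ?_).image _
      rw [hunit a ha, hunit b hb]
      norm_num
    · rintro _ ⟨⟨v, hv, w, hw, -, rfl⟩, hlt⟩
      rw [hK] at hv hw
      obtain ⟨a, ha, y, rfl⟩ := hv
      obtain ⟨b, hb, y', rfl⟩ := hw
      rw [Set.mem_Iio, tsum_comp_sub_sub_comp_sub_sq] at hlt
      rw [tsum_comp_sub_sub_comp_sub_sq]
      exact Set.mem_biUnion ha (Set.mem_biUnion hb ⟨y' - y, hlt, rfl⟩)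
  obtain ⟨k, hk, hkD⟩ := exists_pos_forall_le_of_finite_inter_Iio hpos one_pos hfin
  exact ⟨√k, Real.sqrt_pos.2 hk, fun v hv w hw hvw =>
    Real.sqrt_le_sqrt (hkD _ ⟨v, hv, w, hw, hvw, rfl⟩)⟩

/-- If the critical set `K ⊂ ℓ²(ℤ^d)` consists of the `ℤ^d`-translates of a finite
set `𝓗` of unit vectors, then the distances between distinct elements of `K` are
bounded below: `k = inf{‖v - w‖ : v, w ∈ K, v ≠ w} > 0`. -/
theorem orbit_separation (d : ℕ) (hd : 1 ≤ d)
    (𝓗 : Finset ((Fin d → ℤ) → ℝ))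
    (hmem : ∀ w ∈ 𝓗, Memℓp w 2)
    (hunit : ∀ w ∈ 𝓗, (∑' x : Fin d → ℤ, (w x) ^ 2) = 1)
    (K : Set ((Fin d → ℤ) → ℝ))
    (hK : K = {v | ∃ w ∈ 𝓗, ∃ y : Fin d → ℤ, v = fun x => w (x - y)}) :
    ∃ k > (0:ℝ), ∀ v ∈ K, ∀ w ∈ K, v ≠ w →
      k ≤ Real.sqrt (∑' x : Fin d → ℤ, (v x - w x) ^ 2) :=
  orbit_separation_general d 𝓗 hmem hunit K hK
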